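/- arXiv:2301.09327 — 7 statements merged into one kernel-verified Lean document; each statement's English description precedes it below -/
import Mathlib

section
/- Let 𝓟 = (p₁,…,pₙ) be a point in ℝⁿ and Q₁,…,Q_m points in ℝⁿ (the values of the random vector on the constituents). Then 𝓟 lies in the convex hull of {Q₁,…,Q_m} if and only if for every choice of real stakes s₁,…,sₙ, setting g_h = Σᵢ sᵢ(q_{hi} − pᵢ), it holds that min_h g_h ≤ 0 ≤ max_h g_h. -/
/-!
A linear functional is concave, so by the minimum principle it attains on the points `Q_h` a value
no larger than at any point of their convex hull. Conversely, a point outside the convex hull, which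
is compact, is strictly separated from it by a continuous functional (Hahn–Banach). On `ℝⁿ` such
functionals are dot products with a stake vector `s`, and `g_h = s ⬝ᵥ Q_h - s ⬝ᵥ 𝓟`.
-/

open Set

section
variable {E : Type*} [AddCommGroup E] [Module ℝ E] [TopologicalSpace E] [IsTopologicalAddGroup E]
  [ContinuousSMul ℝ E] [LocallyConvexSpace ℝ E] [T2Space E]

theorem Set.Finite.mem_convexHull_iff_forall_exists_le {s : Set E} (hs : s.Finite) {p : E} :
    p ∈ convexHull ℝ s ↔ ∀ f : StrongDual ℝ E, ∃ q ∈ s, f q ≤ f p := by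
  refine ⟨fun hp f ↦ ((f : E →ₗ[ℝ] ℝ).concaveOn convex_univ).exists_le_of_mem_convexHull
    (subset_univ s) hp, fun H ↦ ?_⟩
  by_contra hp
  obtain ⟨f, u, hfp, hfs⟩ :=
    geometric_hahn_banach_point_closed (convex_convexHull ℝ s) (hs.isClosed_convexHull ℝ) hp
  obtain ⟨q, hq, hfq⟩ := H f
  linarith [hfs q (subset_convexHull ℝ s hq)]

end

theorem StrongDual.exists_eq_dotProduct {ι : Type*} [Fintype ι] (f : StrongDual ℝ (ι → ℝ)) :
    ∃ s : ι → ℝ, ∀ x, f x = s ⬝ᵥ x := by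
  classical
  exact ⟨(dotProductEquiv ℝ ι).symm f, fun x ↦
    (LinearMap.congr_fun ((dotProductEquiv ℝ ι).apply_symm_apply (f : (ι → ℝ) →ₗ[ℝ] ℝ)) x).symm⟩

theorem mem_convexHull_range_iff_forall_exists_dotProduct_le {ι κ : Type*} [Fintype ι] [Finite κ]
    (Q : κ → ι → ℝ) (p : ι → ℝ) :
    p ∈ convexHull ℝ (range Q) ↔ ∀ s : ι → ℝ, ∃ h, s ⬝ᵥ Q h ≤ s ⬝ᵥ p := by
  rw [(finite_range Q).mem_convexHull_iff_forall_exists_le]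
  simp only [exists_range_iff]
  constructor
  · intro H s
    classical
    simpa using H (LinearMap.toContinuousLinearMap (dotProductEquiv ℝ ι s))
  · intro H f
    obtain ⟨s, hs⟩ := f.exists_eq_dotProduct
    simpa only [hs] using H s

theorem mem_convexHull_iff_gain_general {n m : ℕ}
    (p : Fin n → ℝ) (Q : Fin m → Fin n → ℝ) :
    p ∈ convexHull ℝ (Set.range Q) ↔
      ∀ s : Fin n → ℝ,
        (∃ h : Fin m, ∑ i, s i * (Q h i - p i) ≤ 0) ∧
        (∃ h : Fin m, 0 ≤ ∑ i, s i * (Q h i - p i)) := by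
  have gain (s : Fin n → ℝ) (h : Fin m) : ∑ i, s i * (Q h i - p i) = s ⬝ᵥ Q h - s ⬝ᵥ p :=
    dotProduct_sub s (Q h) p
  simp only [gain, sub_nonpos, sub_nonneg, mem_convexHull_range_iff_forall_exists_dotProduct_le]
  refine ⟨fun H s ↦ ⟨H s, ?_⟩, fun H s ↦ (H s).1⟩
  simpa only [neg_dotProduct, neg_le_neg_iff] using H (-s)

/-- Geometric characterization of coherence (Gale alternative / separating
hyperplane): a point `𝓟 = (p₁,…,pₙ)` lies in the convex hull of the points
`Q₁,…,Q_m` iff for every choice of stakes `s₁,…,sₙ`, setting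
`g_h = Σᵢ sᵢ(q_{hi} − pᵢ)`, one has `min_h g_h ≤ 0 ≤ max_h g_h`. -/
theorem mem_convexHull_iff_gain {n m : ℕ} (hm : 0 < m)
    (p : Fin n → ℝ) (Q : Fin m → Fin n → ℝ) :
    p ∈ convexHull ℝ (Set.range Q) ↔
      ∀ s : Fin n → ℝ,
        (∃ h : Fin m, ∑ i, s i * (Q h i - p i) ≤ 0) ∧
        (∃ h : Fin m, 0 ≤ ∑ i, s i * (Q h i - p i)) :=
  mem_convexHull_iff_gain_general p Q
end

section
/- Let E₁, E₂, H₁, H₂ be events with E₁H₁ = ∅, H₁ ≠ ∅, H₂ ≠ ∅, and ¬H₁∧E₂∧H₂ ≠ ∅. Consider the assessment P(E₁|H₁) = 1/2, P(E₂|H₂) = 1. Then the global gain condition min G_{H₁∨H₂} ≤ 0 ≤ max G_{H₁∨H₂} holds for all stakes s₁, s₂ (because G vanishes on the constituent ¬H₁E₂H₂), yet the sub-assessment P(E₁|H₁) = 1/2 is incoherent since G_{H₁} = −s₁/2 < 0 for every s₁ > 0. Hence the no-Dutch-Book condition on the full family is necessary but not sufficient for coherence of conditional probability assessments. -/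
noncomputable def ind {Ω : Type*} (A : Set Ω) : Ω → ℝ := A.indicator 1

/-- The random gain `G = s₁H₁(E₁ − 1/2) + s₂H₂(E₂ − 1)` for the assessment
`P(E₁|H₁) = 1/2`, `P(E₂|H₂) = 1`. -/
noncomputable def gainC {Ω : Type*} (E₁ E₂ H₁ H₂ : Set Ω) (s₁ s₂ : ℝ) (ω : Ω) : ℝ :=
  s₁ * ind H₁ ω * (ind E₁ ω - 1/2) + s₂ * ind H₂ ω * (ind E₂ ω - 1)

section

variable {Ω : Type*} {A : Set Ω} {ω : Ω}

theorem ind_of_mem (h : ω ∈ A) : ind A ω = 1 :=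
  Set.indicator_of_mem h 1

theorem ind_of_notMem (h : ω ∉ A) : ind A ω = 0 :=
  Set.indicator_of_notMem h 1

end

theorem gainC_eq_zero_of_mem {Ω : Type*} (E₁ E₂ H₁ H₂ : Set Ω) (s₁ s₂ : ℝ) {ω : Ω}
    (hω : ω ∈ H₁ᶜ ∩ E₂ ∩ H₂) : gainC E₁ E₂ H₁ H₂ s₁ s₂ ω = 0 := by
  obtain ⟨⟨hH₁, hE₂⟩, hH₂⟩ := hω
  simp only [gainC, ind_of_notMem hH₁, ind_of_mem hE₂, ind_of_mem hH₂]
  ring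

theorem gain_term_eq_neg_half_of_inter_eq_empty {Ω : Type*} {E H : Set Ω} (hEH : E ∩ H = ∅)
    (s : ℝ) {ω : Ω} (hω : ω ∈ H) : s * ind H ω * (ind E ω - 1/2) = -(s / 2) := by
  have hE : ω ∉ E := fun hE => (Set.eq_empty_iff_forall_notMem.mp hEH) ω ⟨hE, hω⟩
  rw [ind_of_mem hω, ind_of_notMem hE]
  ring

theorem necessary_not_sufficient_general {Ω : Type*} (E₁ E₂ H₁ H₂ : Set Ω)
    (h₁ : E₁ ∩ H₁ = ∅)
    (h₄ : (H₁ᶜ ∩ E₂ ∩ H₂).Nonempty) :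
    (∀ s₁ s₂ : ℝ,
        (∃ ω ∈ H₁ ∪ H₂, gainC E₁ E₂ H₁ H₂ s₁ s₂ ω ≤ 0) ∧
        (∃ ω ∈ H₁ ∪ H₂, 0 ≤ gainC E₁ E₂ H₁ H₂ s₁ s₂ ω)) ∧
    (∀ s₁ : ℝ, 0 < s₁ → ∀ ω ∈ H₁, s₁ * ind H₁ ω * (ind E₁ ω - 1/2) < 0) := by
  obtain ⟨ω₀, hω₀⟩ := h₄
  have hH : ω₀ ∈ H₁ ∪ H₂ := Or.inr hω₀.2
  refine ⟨fun s₁ s₂ => ?_, fun s₁ hs₁ ω hω => ?_⟩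
  · have hG := gainC_eq_zero_of_mem E₁ E₂ H₁ H₂ s₁ s₂ hω₀
    exact ⟨⟨ω₀, hH, hG.le⟩, ⟨ω₀, hH, hG.ge⟩⟩
  · rw [gain_term_eq_neg_half_of_inter_eq_empty h₁ s₁ hω]
    linarith

/-- With `E₁H₁ = ∅`, `H₁ ≠ ∅`, `H₂ ≠ ∅`, `¬H₁E₂H₂ ≠ ∅` and the assessment
`P(E₁|H₁) = 1/2`, `P(E₂|H₂) = 1`: the global no-Dutch-Book condition
`min G_{H₁∨H₂} ≤ 0 ≤ max G_{H₁∨H₂}` holds for all stakes (the gain vanishes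
on `¬H₁E₂H₂`), yet the sub-assessment `P(E₁|H₁) = 1/2` is incoherent, since
its own gain restricted to `H₁` is `−s₁/2 < 0` for every `s₁ > 0`.  Hence the
no-Dutch-Book condition on the full family is necessary but not sufficient. -/
theorem necessary_not_sufficient {Ω : Type*} (E₁ E₂ H₁ H₂ : Set Ω)
    (h₁ : E₁ ∩ H₁ = ∅) (h₂ : H₁.Nonempty) (h₃ : H₂.Nonempty)
    (h₄ : (H₁ᶜ ∩ E₂ ∩ H₂).Nonempty) :
    (∀ s₁ s₂ : ℝ,
        (∃ ω ∈ H₁ ∪ H₂, gainC E₁ E₂ H₁ H₂ s₁ s₂ ω ≤ 0) ∧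
        (∃ ω ∈ H₁ ∪ H₂, 0 ≤ gainC E₁ E₂ H₁ H₂ s₁ s₂ ω)) ∧
    (∀ s₁ : ℝ, 0 < s₁ → ∀ ω ∈ H₁, s₁ * ind H₁ ω * (ind E₁ ω - 1/2) < 0) :=
  necessary_not_sufficient_general E₁ E₂ H₁ H₂ h₁ h₄
end

section
/- For logically independent events A, H, B, K (H ≠ ∅, K ≠ ∅), the set of coherent extensions z = P[(A|H) ∧_K (B|K)] of a coherent assessment (x,y) on {A|H, B|K} is exactly the interval [0, min{x,y}]. Consequently the Fréchet–Hoeffding lower bound max{x+y−1, 0} is not attained as the lower coherence bound for ∧_K: for (x,y)=(1,1), z = 0 is coherent. -/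
/-!
Necessity: every point spanning the hulls for `(x, z)` and `(y, z)` lies on or below the
diagonal, a half-plane, so `z ≤ x` and `z ≤ y`. Sufficiency is by explicit convex
combinations. For the triple, the weights `(x-z)(1-y)`, `(y-z)(1-x)`, `z(1-x)(1-y)`,
`(1-z)(1-x)(1-y)` on `(1,y,z)`, `(x,1,z)`, `(1,1,1)`, `(0,0,0)` have barycentre `(x,y,z)`;
they all vanish only when `x = y = 1`, and then `(x,y,z) = (1,y,z)` is itself a vertex.
-/

/-- Coherence of the assessment `(x, y, z)` on `{A|H, B|K, (A|H) ∧_K (B|K)}`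
for logically independent events `A, H, B, K` (all constituents are possible),
where `(A|H) ∧_K (B|K) = AHBK | (AHBK ∨ ¬AH ∨ ¬BK)`.  It is expressed
geometrically: every sub-assessment must lie in the convex hull of the points
associated with the constituents of the corresponding subfamily (singletons
give the conditions `x, y, z ∈ [0,1]`). -/
def CoherentK (x y z : ℝ) : Prop :=
  x ∈ Set.Icc (0:ℝ) 1 ∧ y ∈ Set.Icc (0:ℝ) 1 ∧ z ∈ Set.Icc (0:ℝ) 1 ∧
  (x, y) ∈ convexHull ℝ
    ({((1:ℝ), (1:ℝ)), (1, 0), (1, y), (0, 1), (0, 0), (0, y),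
      (x, 1), (x, 0)} : Set (ℝ × ℝ)) ∧
  (x, z) ∈ convexHull ℝ
    ({((1:ℝ), (1:ℝ)), (1, 0), (1, z), (0, 0), (x, 0)} : Set (ℝ × ℝ)) ∧
  (y, z) ∈ convexHull ℝ
    ({((1:ℝ), (1:ℝ)), (1, 0), (1, z), (0, 0), (y, 0)} : Set (ℝ × ℝ)) ∧
  (x, y, z) ∈ convexHull ℝ
    ({((1:ℝ), (1:ℝ), (1:ℝ)), (1, 0, 0), (1, y, z), (0, 1, 0), (0, 0, 0),
      (0, y, 0), (x, 1, z), (x, 0, 0)} : Set (ℝ × ℝ × ℝ))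

open Finset

theorem mem_convexHull_of_sum_smul_eq {E ι : Type*} [AddCommGroup E] [Module ℝ E]
    {s : Set E} (t : Finset ι) {w : ι → ℝ} {p : ι → E} {v : E}
    (hw : ∀ i ∈ t, 0 ≤ w i) (hpos : 0 < ∑ i ∈ t, w i) (hp : ∀ i ∈ t, p i ∈ s)
    (hv : ∑ i ∈ t, w i • p i = (∑ i ∈ t, w i) • v) : v ∈ convexHull ℝ s := by
  have h := t.centerMass_mem_convexHull hw hpos hp
  rwa [centerMass, hv, inv_smul_smul₀ hpos.ne'] at h

theorem snd_le_fst_of_mem_convexHull {s : Set (ℝ × ℝ)} (hs : ∀ q ∈ s, q.2 ≤ q.1)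
    {q : ℝ × ℝ} (hq : q ∈ convexHull ℝ s) : q.2 ≤ q.1 := by
  have hconv : Convex ℝ {q : ℝ × ℝ | q.2 - q.1 ≤ 0} :=
    convex_halfSpace_le (LinearMap.snd ℝ ℝ ℝ - LinearMap.fst ℝ ℝ ℝ).isLinear 0
  simpa using convexHull_min (fun q hq => by simpa using hs q hq) hconv hq

theorem mk_mem_convexHull_pairPoints {x y : ℝ} (hx0 : 0 ≤ x) (hx1 : x ≤ 1) :
    (x, y) ∈ convexHull ℝ
      ({((1:ℝ), (1:ℝ)), (1, 0), (1, y), (0, 1), (0, 0), (0, y),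
        (x, 1), (x, 0)} : Set (ℝ × ℝ)) :=
  segment_subset_convexHull (x := ((1:ℝ), y)) (y := ((0:ℝ), y)) (by simp) (by simp)
    ⟨x, 1 - x, hx0, by linarith, by ring, by ext <;> simp; ring⟩

theorem mk_mem_convexHull_conjPoints {a c : ℝ} (hc : 0 ≤ c) (hca : c ≤ a) (ha : a ≤ 1) :
    (a, c) ∈ convexHull ℝ
      ({((1:ℝ), (1:ℝ)), (1, 0), (1, c), (0, 0), (a, 0)} : Set (ℝ × ℝ)) := by
  refine mem_convexHull_of_sum_smul_eq univ (w := ![c, a - c, 1 - a])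
    (p := ![((1:ℝ), (1:ℝ)), (1, 0), (0, 0)]) ?_ ?_ ?_ ?_
  · intro i _; fin_cases i <;> simp <;> linarith
  · simp [Fin.sum_univ_three]
  · intro i _; fin_cases i <;> simp
  · ext <;> simp [Fin.sum_univ_three]

theorem le_of_mk_mem_convexHull_conjPoints {a c : ℝ} (ha : 0 ≤ a) (hc : c ≤ 1)
    (h : (a, c) ∈ convexHull ℝ
      ({((1:ℝ), (1:ℝ)), (1, 0), (1, c), (0, 0), (a, 0)} : Set (ℝ × ℝ))) : c ≤ a := by
  refine snd_le_fst_of_mem_convexHull ?_ h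
  simp only [Set.mem_insert_iff, Set.mem_singleton_iff]
  rintro q (rfl | rfl | rfl | rfl | rfl) <;> simp [ha, hc]

theorem mk_mem_convexHull_triplePoints {x y z : ℝ} (hz : 0 ≤ z) (hzx : z ≤ x) (hzy : z ≤ y)
    (hx : x ≤ 1) (hy : y ≤ 1) :
    (x, y, z) ∈ convexHull ℝ
      ({((1:ℝ), (1:ℝ), (1:ℝ)), (1, 0, 0), (1, y, z), (0, 1, 0), (0, 0, 0),
        (0, y, 0), (x, 1, z), (x, 0, 0)} : Set (ℝ × ℝ × ℝ)) := by
  by_cases hxy : x = 1 ∧ y = 1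
  · obtain ⟨rfl, rfl⟩ := hxy
    exact subset_convexHull ℝ _ (by simp)
  have hxz : 0 ≤ x - z := sub_nonneg.2 hzx
  have hyz : 0 ≤ y - z := sub_nonneg.2 hzy
  have h1x : 0 ≤ 1 - x := sub_nonneg.2 hx
  have h1y : 0 ≤ 1 - y := sub_nonneg.2 hy
  have h1z : 0 < 1 - z := by grind
  have hxy1 : 0 < (1 - x) + (1 - y) := by grind
  refine mem_convexHull_of_sum_smul_eq univ
    (w := ![(x - z) * (1 - y), (y - z) * (1 - x), z * (1 - x) * (1 - y),
      (1 - z) * (1 - x) * (1 - y)])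
    (p := ![((1:ℝ), y, z), (x, 1, z), (1, 1, 1), (0, 0, 0)]) ?_ ?_ ?_ ?_
  · intro i _
    fin_cases i <;> simp only [Fin.reduceFinMk, Matrix.cons_val] <;>
      apply_rules [mul_nonneg, h1z.le]
  · simp only [Fin.sum_univ_four, Matrix.cons_val]
    linarith [mul_pos hxy1 h1z, mul_nonneg hxz h1y, mul_nonneg hyz h1x]
  · intro i _
    fin_cases i <;> simp
  · ext <;> simp [Fin.sum_univ_four] <;> ring

theorem coherentK_of_le {x y z : ℝ} (hz : 0 ≤ z) (hzx : z ≤ x) (hzy : z ≤ y)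
    (hx : x ≤ 1) (hy : y ≤ 1) : CoherentK x y z :=
  ⟨⟨hz.trans hzx, hx⟩, ⟨hz.trans hzy, hy⟩, ⟨hz, hzx.trans hx⟩,
    mk_mem_convexHull_pairPoints (hz.trans hzx) hx, mk_mem_convexHull_conjPoints hz hzx hx,
    mk_mem_convexHull_conjPoints hz hzy hy, mk_mem_convexHull_triplePoints hz hzx hzy hx hy⟩

theorem CoherentK.mem_Icc_min {x y z : ℝ} (h : CoherentK x y z) :
    z ∈ Set.Icc 0 (min x y) := by
  obtain ⟨⟨hx, -⟩, ⟨hy, -⟩, ⟨hz0, hz1⟩, -, hxz, hyz, -⟩ := h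
  exact ⟨hz0, le_min (le_of_mk_mem_convexHull_conjPoints hx hz1 hxz)
    (le_of_mk_mem_convexHull_conjPoints hy hz1 hyz)⟩

/-- For logically independent events, the coherent extensions
`z = P[(A|H) ∧_K (B|K)]` of a coherent assessment `(x, y)` on `{A|H, B|K}`
are exactly the interval `[0, min{x, y}]`.  Consequently the
Fréchet–Hoeffding lower bound `max{x+y−1, 0}` is not the lower coherence
bound for `∧_K`: for `(x, y) = (1, 1)` the value `z = 0` is coherent. -/
theorem conjK_extension_interval (x y : ℝ)
    (hx : x ∈ Set.Icc (0:ℝ) 1) (hy : y ∈ Set.Icc (0:ℝ) 1) :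
    {z : ℝ | CoherentK x y z} = Set.Icc 0 (min x y) ∧ CoherentK 1 1 0 := by
  refine ⟨Set.Subset.antisymm (fun z hz => hz.mem_Icc_min) ?_,
    coherentK_of_le le_rfl zero_le_one zero_le_one le_rfl le_rfl⟩
  rintro z ⟨hz, hzxy⟩
  exact coherentK_of_le hz (hzxy.trans (min_le_left x y)) (hzxy.trans (min_le_right x y))
    hx.2 hy.2
end

section
/- Define the conjunction of conditional events as the conditional random quantity (A|H) ∧ (B|K) := (AHBK + x·¬HBK + y·AH¬K) | (H ∨ K) where x = P(A|H), y = P(B|K). If A, B, H, K are stochastically independent events with P(H∨K) > 0, then ℙ[(A|H) ∧ (B|K)] = P(A)·P(B). -/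
/-!
Independence makes every marginal of the sixteen atoms `A' ∩ B' ∩ H' ∩ K'` factorize, so
`x = P A`, `y = P B`, and with `a, b, h, k` the probabilities of `A, B, H, K` the numerator is
`a b h k + a · b (1 - h) k + b · a h (1 - k) = a b (h + k - h k) = a b · P (H ∪ K)`.
-/

open Set

section FinitelyAdditive

variable {Ω : Type*} {P : Set Ω → ℝ}

theorem apply_eq_inter_add_inter_compl
    (hPadd : ∀ S T : Set Ω, Disjoint S T → P (S ∪ T) = P S + P T) (S T : Set Ω) :
    P S = P (S ∩ T) + P (S ∩ Tᶜ) := by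
  rw [← hPadd (S ∩ T) (S ∩ Tᶜ) (disjoint_compl_right.mono inter_subset_right inter_subset_right),
    inter_union_compl]

theorem apply_compl (hP1 : P univ = 1)
    (hPadd : ∀ S T : Set Ω, Disjoint S T → P (S ∪ T) = P S + P T) (S : Set Ω) :
    P Sᶜ = 1 - P S := by
  have := hPadd S Sᶜ disjoint_compl_right
  rw [union_compl_self, hP1] at this
  linarith

theorem apply_union_eq_add_compl_inter
    (hPadd : ∀ S T : Set Ω, Disjoint S T → P (S ∪ T) = P S + P T) (H K : Set Ω) :
    P (H ∪ K) = P H + P (Hᶜ ∩ K) := by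
  rw [← hPadd H (Hᶜ ∩ K) (disjoint_compl_right.mono_right inter_subset_left),
    ← sdiff_eq_compl_inter, union_sdiff_self]

end FinitelyAdditive

def FactorsOn {Ω : Type*} (P : Set Ω → ℝ) (𝒜 ℬ 𝒞 𝒟 : Set (Set Ω)) : Prop :=
  ∀ A ∈ 𝒜, ∀ B ∈ ℬ, ∀ C ∈ 𝒞, ∀ D ∈ 𝒟, P (A ∩ B ∩ C ∩ D) = P A * P B * P C * P D

namespace FactorsOn

variable {Ω : Type*} {P : Set Ω → ℝ} {𝒜 ℬ 𝒞 𝒟 : Set (Set Ω)}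

theorem rotate (h : FactorsOn P 𝒜 ℬ 𝒞 𝒟) : FactorsOn P 𝒟 𝒜 ℬ 𝒞 := by
  intro D hD A hA B hB C hC
  rw [show D ∩ A ∩ B ∩ C = A ∩ B ∩ C ∩ D by
    simp only [inter_comm, inter_left_comm], h A hA B hB C hC D hD]
  ring

/-- Marginalizing over the last event: `P (S ∩ univ) = P (S ∩ D) + P (S ∩ Dᶜ)`. -/
theorem insert_univ (hP1 : P univ = 1)
    (hPadd : ∀ S T : Set Ω, Disjoint S T → P (S ∪ T) = P S + P T) {D : Set Ω}
    (h : FactorsOn P 𝒜 ℬ 𝒞 {D, Dᶜ}) : FactorsOn P 𝒜 ℬ 𝒞 {univ, D, Dᶜ} := by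
  intro A hA B hB C hC D' hD'
  obtain rfl | hD' := hD'
  · rw [inter_univ, hP1, mul_one, apply_eq_inter_add_inter_compl hPadd _ D,
      h A hA B hB C hC D (by simp), h A hA B hB C hC Dᶜ (by simp), apply_compl hP1 hPadd]
    ring
  · exact h A hA B hB C hC D' hD'

theorem rotate_insert_univ (hP1 : P univ = 1)
    (hPadd : ∀ S T : Set Ω, Disjoint S T → P (S ∪ T) = P S + P T) {D : Set Ω}
    (h : FactorsOn P 𝒜 ℬ 𝒞 {D, Dᶜ}) : FactorsOn P {univ, D, Dᶜ} 𝒜 ℬ 𝒞 :=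
  (h.insert_univ hP1 hPadd).rotate

theorem marginals (hP1 : P univ = 1)
    (hPadd : ∀ S T : Set Ω, Disjoint S T → P (S ∪ T) = P S + P T) {A B C D : Set Ω}
    (h : FactorsOn P {A, Aᶜ} {B, Bᶜ} {C, Cᶜ} {D, Dᶜ}) :
    FactorsOn P {univ, A, Aᶜ} {univ, B, Bᶜ} {univ, C, Cᶜ} {univ, D, Dᶜ} :=
  (((h.rotate_insert_univ hP1 hPadd).rotate_insert_univ hP1 hPadd).rotate_insert_univ
    hP1 hPadd).rotate_insert_univ hP1 hPadd

end FactorsOn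

theorem prevision_conj_of_indep_general {Ω : Type*} (P : Set Ω → ℝ) (A B H K : Set Ω)
    (x y : ℝ)
    (hP1 : P Set.univ = 1)
    (hPadd : ∀ S T : Set Ω, Disjoint S T → P (S ∪ T) = P S + P T)
    (hInd : ∀ A' B' H' K' : Set Ω,
      (A' = A ∨ A' = Aᶜ) → (B' = B ∨ B' = Bᶜ) →
      (H' = H ∨ H' = Hᶜ) → (K' = K ∨ K' = Kᶜ) →
      P (A' ∩ B' ∩ H' ∩ K') = P A' * P B' * P H' * P K')
    (hH : 0 < P H) (hK : 0 < P K) (hHK : 0 < P (H ∪ K))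
    (hx : x = P (A ∩ H) / P H) (hy : y = P (B ∩ K) / P K) :
    (P (A ∩ H ∩ B ∩ K) + x * P (Hᶜ ∩ B ∩ K) + y * P (A ∩ H ∩ Kᶜ)) / P (H ∪ K)
      = P A * P B := by
  have hfac : FactorsOn P {univ, A, Aᶜ} {univ, B, Bᶜ} {univ, H, Hᶜ} {univ, K, Kᶜ} :=
    FactorsOn.marginals hP1 hPadd fun A' hA B' hB H' hH K' hK => hInd A' B' H' K' hA hB hH hK
  have hAHBK : P (A ∩ H ∩ B ∩ K) = P A * P B * P H * P K := by
    rw [inter_right_comm A H B]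
    simpa using hfac A (by simp) B (by simp) H (by simp) K (by simp)
  have hHcBK : P (Hᶜ ∩ B ∩ K) = P B * P Hᶜ * P K := by
    rw [inter_comm Hᶜ B]
    simpa [hP1] using hfac univ (by simp) B (by simp) Hᶜ (by simp) K (by simp)
  have hAHKc : P (A ∩ H ∩ Kᶜ) = P A * P H * P Kᶜ := by
    simpa [hP1] using hfac A (by simp) univ (by simp) H (by simp) Kᶜ (by simp)
  have hHcK : P (Hᶜ ∩ K) = P Hᶜ * P K := by
    simpa [hP1] using hfac univ (by simp) univ (by simp) Hᶜ (by simp) K (by simp)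
  have hxA : x = P A := by
    rw [hx, show P (A ∩ H) = P A * P H by
      simpa [hP1] using hfac A (by simp) univ (by simp) H (by simp) univ (by simp)]
    field_simp
  have hyB : y = P B := by
    rw [hy, show P (B ∩ K) = P B * P K by
      simpa [hP1] using hfac univ (by simp) B (by simp) univ (by simp) K (by simp)]
    field_simp
  rw [div_eq_iff hHK.ne', apply_union_eq_add_compl_inter hPadd, hAHBK, hHcBK, hAHKc, hHcK, hxA,
    hyB, apply_compl hP1 hPadd H, apply_compl hP1 hPadd K]
  ring

/-- Prevision of the conjunction of conditional random quantities under
stochastic independence.  For a finitely additive probability `P` and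
stochastically independent events `A, B, H, K` with `P(H) > 0`, `P(K) > 0`,
`P(H∨K) > 0`, setting `x = P(A|H) = P(AH)/P(H)` and `y = P(B|K) = P(BK)/P(K)`,
the prevision
`ℙ[(A|H) ∧ (B|K)] = [P(AHBK) + x·P(¬HBK) + y·P(AH¬K)] / P(H∨K)`
of `(A|H) ∧ (B|K) := (AHBK + x·¬HBK + y·AH¬K)|(H∨K)` equals `P(A)·P(B)`. -/
theorem prevision_conj_of_indep {Ω : Type*} (P : Set Ω → ℝ) (A B H K : Set Ω)
    (x y : ℝ)
    (hP1 : P Set.univ = 1)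
    (hPnonneg : ∀ S : Set Ω, 0 ≤ P S)
    (hPadd : ∀ S T : Set Ω, Disjoint S T → P (S ∪ T) = P S + P T)
    (hInd : ∀ A' B' H' K' : Set Ω,
      (A' = A ∨ A' = Aᶜ) → (B' = B ∨ B' = Bᶜ) →
      (H' = H ∨ H' = Hᶜ) → (K' = K ∨ K' = Kᶜ) →
      P (A' ∩ B' ∩ H' ∩ K') = P A' * P B' * P H' * P K')
    (hH : 0 < P H) (hK : 0 < P K) (hHK : 0 < P (H ∪ K))
    (hx : x = P (A ∩ H) / P H) (hy : y = P (B ∩ K) / P K) :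
    (P (A ∩ H ∩ B ∩ K) + x * P (Hᶜ ∩ B ∩ K) + y * P (A ∩ H ∩ Kᶜ)) / P (H ∪ K)
      = P A * P B :=
  prevision_conj_of_indep_general P A B H K x y hP1 hPadd hInd hH hK hHK hx hy
end

section
/- The conjunction and disjunction of conditional random quantities satisfy the numerical De Morgan laws: (A|H) ∨ (B|K) = 1 − (¬A|H) ∧ (¬B|K) and (A|H) ∧ (B|K) = 1 − (¬A|H) ∨ (¬B|K), as equalities of random quantities. -/
/-- The indicator of the conditional event `A|H` with `x = P(A|H)`:
value `1` on `AH`, `0` on `¬AH`, `x` on `¬H`. -/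
noncomputable def condRQ {Ω : Type*} (A H : Set Ω) (x : ℝ) : Ω → ℝ :=
  fun ω => ind (A ∩ H) ω + x * ind Hᶜ ω

/-- The conjunction `(A|H) ∧ (B|K)` as a random quantity: value `1` on `AHBK`,
`0` on `¬AH ∨ ¬BK`, `x` on `¬HBK`, `y` on `AH¬K`, `z` on `¬H¬K`, where
`x = P(A|H)`, `y = P(B|K)`, `z = ℙ[(A|H) ∧ (B|K)]`. -/
noncomputable def conjRQ {Ω : Type*} (A H B K : Set Ω) (x y z : ℝ) : Ω → ℝ :=
  fun ω => ind (A ∩ H ∩ (B ∩ K)) ω + x * ind (Hᶜ ∩ B ∩ K) ω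
    + y * ind (A ∩ H ∩ Kᶜ) ω + z * ind (Hᶜ ∩ Kᶜ) ω

/-- The disjunction `(A|H) ∨ (B|K)` as a random quantity: value `1` on
`AH ∨ BK`, `0` on `¬AH¬BK`, `x` on `¬H¬BK`, `y` on `¬AH¬K`, `w` on `¬H¬K`. -/
noncomputable def disjRQ {Ω : Type*} (A H B K : Set Ω) (x y w : ℝ) : Ω → ℝ :=
  fun ω => ind (A ∩ H ∪ B ∩ K) ω + x * ind (Hᶜ ∩ Bᶜ ∩ K) ω
    + y * ind (Aᶜ ∩ H ∩ Kᶜ) ω + w * ind (Hᶜ ∩ Kᶜ) ω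

theorem disjRQ_eq_one_sub_conjRQ_compl {Ω : Type*} (A H B K : Set Ω) (x y z : ℝ) (ω : Ω) :
    disjRQ A H B K x y (1 - z) ω = 1 - conjRQ Aᶜ H Bᶜ K (1 - x) (1 - y) z ω := by
  classical
  simp only [disjRQ, conjRQ, ind, Set.indicator_apply, Set.mem_inter_iff, Set.mem_union,
    Set.mem_compl_iff, Pi.one_apply]
  by_cases hA : ω ∈ A <;> by_cases hH : ω ∈ H <;> by_cases hB : ω ∈ B <;>
    by_cases hK : ω ∈ K <;> simp [hA, hH, hB, hK]

/-- Numerical De Morgan laws for conjunction and disjunction of conditional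
random quantities:  `(A|H) ∨ (B|K) = 1 − (¬A|H) ∧ (¬B|K)` and
`(A|H) ∧ (B|K) = 1 − (¬A|H) ∨ (¬B|K)`, as equalities of random quantities,
with `x = P(A|H)`, `y = P(B|K)`, `z' = ℙ[(¬A|H) ∧ (¬B|K)]`,
`w' = ℙ[(¬A|H) ∨ (¬B|K)]`, and previsions (by coherence) satisfying
`w = 1 − z'` and `z = 1 − w'`. -/
theorem deMorgan_condRQ {Ω : Type*} (A H B K : Set Ω)
    (x y z w z' w' : ℝ) (hw : w = 1 - z') (hz : z = 1 - w') :
    (∀ ω : Ω, disjRQ A H B K x y w ω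
        = 1 - conjRQ Aᶜ H Bᶜ K (1 - x) (1 - y) z' ω) ∧
    (∀ ω : Ω, conjRQ A H B K x y z ω
        = 1 - disjRQ Aᶜ H Bᶜ K (1 - x) (1 - y) w' ω) := by
  subst hw hz
  refine ⟨disjRQ_eq_one_sub_conjRQ_compl A H B K x y z', fun ω => ?_⟩
  have h := disjRQ_eq_one_sub_conjRQ_compl Aᶜ H Bᶜ K (1 - x) (1 - y) (1 - w') ω
  rw [compl_compl, compl_compl, sub_sub_cancel, sub_sub_cancel, sub_sub_cancel] at h
  linarith
end

section
/- For the conjunction of conditional random quantities, the prevision sum rule holds: (A|H) ∨ (B|K) = A|H + B|K − (A|H) ∧ (B|K) as random quantities, and hence ℙ[(A|H) ∨ (B|K)] = P(A|H) + P(B|K) − ℙ[(A|H) ∧ (B|K)]. -/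
/-! Rewriting indicators of intersections, complements and unions in terms of those of
`A`, `H`, `B`, `K` turns both sides into polynomials in four indicators, and the sum rule
holds already as a polynomial identity (idempotence of indicators is not needed), so the
constituent-by-constituent check collapses into one `ring` computation. -/

section Indicator

variable {Ω : Type*} (s t : Set Ω) (ω : Ω)

theorem ind_inter : ind (s ∩ t) ω = ind s ω * ind t ω :=
  congrFun (Set.inter_indicator_one (s := s) (t := t)) ω

theorem ind_compl : ind sᶜ ω = 1 - ind s ω := by
  simp only [ind, Set.indicator_compl, Pi.sub_apply, Pi.one_apply]

theorem ind_union : ind (s ∪ t) ω = ind s ω + ind t ω - ind s ω * ind t ω := by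
  rw [← ind_inter, eq_sub_iff_add_eq]
  exact Set.indicator_union_add_inter_apply _ _ _ _

end Indicator

theorem disjRQ_eq_condRQ_add_condRQ_sub_conjRQ {Ω : Type*} (A H B K : Set Ω) (x y z : ℝ) :
    disjRQ A H B K x y (x + y - z) = condRQ A H x + condRQ B K y - conjRQ A H B K x y z := by
  funext ω
  simp only [disjRQ, condRQ, conjRQ, Pi.add_apply, Pi.sub_apply, ind_union, ind_inter,
    ind_compl]
  ring

/-- Prevision sum rule: with `w = x + y − z`,
`(A|H) ∨ (B|K) = A|H + B|K − (A|H) ∧ (B|K)` as random quantities; hence for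
any linear prevision functional `ℙ`,
`ℙ[(A|H) ∨ (B|K)] = P(A|H) + P(B|K) − ℙ[(A|H) ∧ (B|K)]`. -/
theorem prevision_sum_rule {Ω : Type*} (A H B K : Set Ω) (x y z : ℝ) :
    (∀ ω : Ω, disjRQ A H B K x y (x + y - z) ω
        = condRQ A H x ω + condRQ B K y ω - conjRQ A H B K x y z ω) ∧
    (∀ 𝔼 : (Ω → ℝ) →ₗ[ℝ] ℝ, 𝔼 (disjRQ A H B K x y (x + y - z))
        = 𝔼 (condRQ A H x) + 𝔼 (condRQ B K y) - 𝔼 (conjRQ A H B K x y z)) := by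
  have h := disjRQ_eq_condRQ_add_condRQ_sub_conjRQ A H B K x y z
  refine ⟨fun ω => congrFun h ω, fun 𝔼 => ?_⟩
  rw [h, map_sub, map_add]
end

section
/- Compound probability as conjunction: for events E, H, K with HK ≠ ∅, K ≠ ∅, the conjunction of conditional random quantities satisfies (E|HK) ∧ (H|K) = EH|K, and consequently ℙ[(E|HK) ∧ (H|K)] = P(EH|K) = P(E|HK)·P(H|K). -/
/-! Intersecting with `B ∩ K` kills the `x`- and `y`-terms of the conjunction, its first term becomes
`ind (A ∩ B ∩ K)` and its `z`-term `z * ind Kᶜ`, which is exactly the conditional random quantity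
`A ∩ B | K`. The product rule then follows by cancelling `P K` in
`p * P K = P (E ∩ H ∩ K) = x * y * P K`. -/

theorem conjRQ_inter_eq_condRQ_inter {Ω : Type*} (A B K : Set Ω) (x y z : ℝ) :
    conjRQ A (B ∩ K) B K x y z = condRQ (A ∩ B) K z := by
  funext ω
  by_cases hA : ω ∈ A <;> by_cases hB : ω ∈ B <;> by_cases hK : ω ∈ K <;>
    simp [conjRQ, condRQ, ind, hA, hB, hK]

theorem eq_mul_of_ratios {M : Type*} [MonoidWithZero M] [IsRightCancelMulZero M] {a b c x y p : M}
    (hab : a = x * b) (hbc : b = y * c) (hac : a = p * c) (hc : c ≠ 0) : p = x * y :=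
  mul_right_cancel₀ hc (by rw [← hac, hab, hbc, mul_assoc])

theorem compound_probability_conj_general {Ω : Type*} (E H K : Set Ω)
    (x y : ℝ) :
    (∀ z : ℝ, ∀ ω : Ω,
        conjRQ E (H ∩ K) H K x y z ω = condRQ (E ∩ H) K z ω) ∧
    (∀ (P : Set Ω → ℝ) (p : ℝ),
        P (E ∩ H ∩ K) = x * P (H ∩ K) → P (H ∩ K) = y * P K →
        P (E ∩ H ∩ K) = p * P K → 0 < P K → p = x * y) :=
  ⟨fun z => congrFun (conjRQ_inter_eq_condRQ_inter E H K x y z),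
    fun _ _ hx hy hp hPK => eq_mul_of_ratios hx hy hp hPK.ne'⟩

/-- Compound probability as conjunction: for events `E, H, K` with `HK ≠ ∅`,
`K ≠ ∅`, with `x = P(E|HK)`, `y = P(H|K)`, the conjunction satisfies
`(E|HK) ∧ (H|K) = EH|K` (as random quantities, for any common prevision
`z = ℙ[(E|HK) ∧ (H|K)] = P(EH|K)`); consequently, for any finitely additive
probability `P` satisfying the compound probability rules
`P(EHK) = x·P(HK)`, `P(HK) = y·P(K)`, `P(EHK) = p·P(K)` with `P(K) > 0`,
one gets `ℙ[(E|HK) ∧ (H|K)] = P(EH|K) = P(E|HK)·P(H|K)`, i.e. `p = x·y`. -/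
theorem compound_probability_conj {Ω : Type*} (E H K : Set Ω)
    (hHK : (H ∩ K).Nonempty) (hK : K.Nonempty) (x y : ℝ) :
    (∀ z : ℝ, ∀ ω : Ω,
        conjRQ E (H ∩ K) H K x y z ω = condRQ (E ∩ H) K z ω) ∧
    (∀ (P : Set Ω → ℝ) (p : ℝ),
        P (E ∩ H ∩ K) = x * P (H ∩ K) → P (H ∩ K) = y * P K →
        P (E ∩ H ∩ K) = p * P K → 0 < P K → p = x * y) :=
  compound_probability_conj_general E H K x y
end
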